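/- arXiv:math/0702744 — 2 statements merged into one kernel-verified Lean document; each statement's English description precedes it below -/
import Mathlib

section
/- Let R be an n×n nonnegative matrix with ‖R‖₁ ≤ 1, and let R⃗ = R₁R₂⋯R_n be the scan matrix formed from R (R_j is the identity with column j replaced by column j of R). Then λ(R⃗) ≤ λ(R) and ‖R⃗‖₁ ≤ ‖R‖₁. -/
open Matrix

/-- The spectral radius of a real square matrix: the supremum of the absolute
values of its (complex) eigenvalues, i.e. of the roots of its characteristic
polynomial over `ℂ`. -/
noncomputable def specRad {n : ℕ} (R : Matrix (Fin n) (Fin n) ℝ) : ℝ :=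
  sSup {r : ℝ | ∃ μ : ℂ, ((R.map (fun a => (a : ℂ))).charpoly).IsRoot μ ∧ r = ‖μ‖}

/-- The maximum absolute column sum norm `‖·‖₁`. -/
noncomputable def norm1 {m n : ℕ} (B : Matrix (Fin m) (Fin n) ℝ) : ℝ :=
  ⨆ j, ∑ i, |B i j|

/-- The maximum absolute row sum norm `‖·‖_∞`. -/
noncomputable def normInf {m n : ℕ} (B : Matrix (Fin m) (Fin n) ℝ) : ℝ :=
  ⨆ i, ∑ j, |B i j|

/-- `colMat R j` is the identity matrix with column `j` replaced by column `j`
of `R`. -/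
def colMat {n : ℕ} (R : Matrix (Fin n) (Fin n) ℝ) (j : Fin n) :
    Matrix (Fin n) (Fin n) ℝ :=
  Matrix.of fun i k => if k = j then R i j else if i = k then 1 else 0

/-- The scan matrix `R⃗ = R₁ R₂ ⋯ Rₙ`. -/
def scanMat {n : ℕ} (R : Matrix (Fin n) (Fin n) ℝ) : Matrix (Fin n) (Fin n) ℝ :=
  ((List.finRange n).map (colMat R)).prod

/-! For `t ∈ (λ(R), 1]` the row vector `w = 𝟙ᵀ (t - R)⁻¹` is positive and satisfies `w R ≤ t w`.
Right multiplication by `R_j` changes a row vector `u ≤ w` only in entry `j`, which becomes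
`(u R)ⱼ ≤ (w R)ⱼ ≤ t wⱼ ≤ wⱼ`; scanning through `j = 1, …, n` therefore gives `w R⃗ ≤ t w`, and a
positive vector with `w R⃗ ≤ t w` bounds every eigenvalue of `R⃗` by `t`. The same scan with `w = 𝟙`
compares the column sums of `R⃗` and `R`, which gives `‖R⃗‖₁ ≤ ‖R‖₁`; when `λ(R) ≥ 1` this already
yields `λ(R⃗) ≤ ‖R⃗‖₁ ≤ 1 ≤ λ(R)`. -/

open Polynomial

variable {n : ℕ}

lemma exists_mulVec_eq_smul_of_isRoot_charpoly {A : Matrix (Fin n) (Fin n) ℂ} {μ : ℂ}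
    (h : A.charpoly.IsRoot μ) : ∃ x ≠ 0, A *ᵥ x = μ • x := by
  rw [IsRoot, eval_charpoly, ← exists_mulVec_eq_zero_iff] at h
  obtain ⟨x, hx, hμx⟩ := h
  refine ⟨x, hx, ?_⟩
  rw [sub_mulVec, sub_eq_zero, scalar_apply] at hμx
  ext i
  simpa [mulVec_diagonal] using (congrFun hμx i).symm

lemma norm_le_of_isRoot_of_vecMul_le {A : Matrix (Fin n) (Fin n) ℝ} (hA : ∀ i j, 0 ≤ A i j)
    {w : Fin n → ℝ} (hw : ∀ i, 0 < w i) {t : ℝ} (hwt : w ᵥ* A ≤ t • w) {μ : ℂ}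
    (hμ : (A.map (fun a => (a : ℂ))).charpoly.IsRoot μ) : ‖μ‖ ≤ t := by
  obtain ⟨x, hx, hAx⟩ := exists_mulVec_eq_smul_of_isRoot_charpoly hμ
  set y : Fin n → ℝ := fun k => ‖x k‖
  have hy : 0 ≤ y := fun k => norm_nonneg _
  have hwy : 0 < w ⬝ᵥ y := by
    obtain ⟨i, hi⟩ := Function.ne_iff.mp hx
    exact Finset.sum_pos' (fun k _ => mul_nonneg (hw k).le (hy k))
      ⟨i, Finset.mem_univ _, mul_pos (hw i) (norm_pos_iff.mpr hi)⟩
  have hAy : (fun i => ‖μ‖ * y i) ≤ A *ᵥ y := fun i => by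
    calc ‖μ‖ * y i = ‖(μ • x) i‖ := by simp [y]
      _ = ‖∑ k, (A i k : ℂ) * x k‖ := by rw [← hAx]; rfl
      _ ≤ ∑ k, A i k * y k := by
          refine (norm_sum_le _ _).trans_eq (Finset.sum_congr rfl fun k _ => ?_)
          rw [norm_mul, Complex.norm_real, Real.norm_of_nonneg (hA i k)]
  refine le_of_mul_le_mul_right ?_ hwy
  calc ‖μ‖ * (w ⬝ᵥ y) = w ⬝ᵥ fun i => ‖μ‖ * y i := by
        simp only [dotProduct, Finset.mul_sum]; ring_nf
    _ ≤ w ⬝ᵥ (A *ᵥ y) := dotProduct_le_dotProduct_of_nonneg_left hAy fun i => (hw i).le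
    _ = (w ᵥ* A) ⬝ᵥ y := dotProduct_mulVec _ _ _
    _ ≤ (t • w) ⬝ᵥ y := dotProduct_le_dotProduct_of_nonneg_right hwt hy
    _ = t * (w ⬝ᵥ y) := smul_dotProduct _ _ _

lemma specRad_le_of_vecMul_le {A : Matrix (Fin n) (Fin n) ℝ} (hA : ∀ i j, 0 ≤ A i j)
    {w : Fin n → ℝ} (hw : ∀ i, 0 < w i) {t : ℝ} (ht : 0 ≤ t) (hwt : w ᵥ* A ≤ t • w) :
    specRad A ≤ t :=
  Real.sSup_le (fun _ ⟨_, hμ, hr⟩ => hr ▸ norm_le_of_isRoot_of_vecMul_le hA hw hwt hμ) ht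

lemma specRad_nonneg (A : Matrix (Fin n) (Fin n) ℝ) : 0 ≤ specRad A :=
  Real.sSup_nonneg fun _ ⟨_, _, hr⟩ => hr ▸ norm_nonneg _

lemma norm_le_specRad_of_isRoot {A : Matrix (Fin n) (Fin n) ℝ} {μ : ℂ}
    (hμ : (A.map (fun a => (a : ℂ))).charpoly.IsRoot μ) : ‖μ‖ ≤ specRad A := by
  have hfin := (finite_setOfPred_isRoot (A.map (fun a => (a : ℂ))).charpoly_monic.ne_zero).image
    (‖·‖)
  refine le_csSup (hfin.subset ?_).bddAbove ⟨μ, hμ, rfl⟩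
  rintro _ ⟨ν, hν, rfl⟩
  exact ⟨ν, hν, rfl⟩

lemma det_scalar_sub_ne_zero_of_specRad_lt {A : Matrix (Fin n) (Fin n) ℝ} {s : ℝ}
    (hs : specRad A < s) : (scalar (Fin n) s - A).det ≠ 0 := by
  intro hdet
  have hroot : (A.map (fun a => (a : ℂ))).charpoly.IsRoot (s : ℂ) := by
    rw [show (fun a : ℝ => (a : ℂ)) = Complex.ofRealHom from rfl, charpoly_map, IsRoot, eval_map]
    change eval₂ _ (Complex.ofRealHom s) _ = 0
    rw [eval₂_at_apply, eval_charpoly, hdet, map_zero]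
  have := norm_le_specRad_of_isRoot hroot
  rw [Complex.norm_real, Real.norm_of_nonneg ((specRad_nonneg A).trans hs.le)] at this
  exact this.not_gt hs

lemma sum_abs_le_norm1 {m : ℕ} (B : Matrix (Fin m) (Fin n) ℝ) (j : Fin n) :
    ∑ i, |B i j| ≤ norm1 B :=
  le_ciSup (f := fun j => ∑ i, |B i j|) (Set.finite_range _).bddAbove j

lemma norm1_nonneg {m : ℕ} (B : Matrix (Fin m) (Fin n) ℝ) : 0 ≤ norm1 B :=
  Real.iSup_nonneg fun _ => Finset.sum_nonneg fun _ _ => abs_nonneg _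

lemma one_vecMul_apply {m : ℕ} (B : Matrix (Fin m) (Fin n) ℝ) (j : Fin n) :
    (1 ᵥ* B) j = ∑ i, B i j := by
  simp [vecMul, dotProduct]

lemma one_vecMul_le_norm1 {m : ℕ} {B : Matrix (Fin m) (Fin n) ℝ} (hB : ∀ i j, 0 ≤ B i j) :
    1 ᵥ* B ≤ norm1 B • 1 := fun j => by
  simpa [one_vecMul_apply, abs_of_nonneg (hB _ j)] using sum_abs_le_norm1 B j

lemma specRad_le_norm1 {A : Matrix (Fin n) (Fin n) ℝ} (hA : ∀ i j, 0 ≤ A i j) :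
    specRad A ≤ norm1 A :=
  specRad_le_of_vecMul_le hA (fun _ => one_pos) (norm1_nonneg A) (one_vecMul_le_norm1 hA)

lemma vecMul_mono_of_nonneg {m : ℕ} {B : Matrix (Fin m) (Fin n) ℝ} (hB : ∀ i j, 0 ≤ B i j)
    {u v : Fin m → ℝ} (huv : u ≤ v) : u ᵥ* B ≤ v ᵥ* B :=
  fun j => dotProduct_le_dotProduct_of_nonneg_right huv fun i => hB i j

noncomputable def resolventWeight (A : Matrix (Fin n) (Fin n) ℝ) (s : ℝ) : Fin n → ℝ :=
  1 ᵥ* (scalar (Fin n) s - A)⁻¹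

lemma resolventWeight_vecMul {A : Matrix (Fin n) (Fin n) ℝ} {s : ℝ}
    (hs : (scalar (Fin n) s - A).det ≠ 0) :
    resolventWeight A s ᵥ* A = s • resolventWeight A s - 1 := by
  have h : resolventWeight A s ᵥ* (scalar (Fin n) s - A) = 1 := by
    rw [resolventWeight, vecMul_vecMul, nonsing_inv_mul _ (isUnit_iff_ne_zero.mpr hs), vecMul_one]
  rw [vecMul_sub, scalar_apply, vecMul_diagonal_const] at h
  rw [← h]
  simp

lemma continuousOn_resolventWeight (A : Matrix (Fin n) (Fin n) ℝ) :
    ContinuousOn (resolventWeight A) (Set.Ioi (specRad A)) := by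
  have hsub : Continuous fun s : ℝ => scalar (Fin n) s - A :=
    (continuous_id.matrix_diagonal (n := Fin n) |>.comp (continuous_pi fun _ => continuous_id)).sub
      continuous_const
  refine fun s hs => ContinuousAt.continuousWithinAt ?_
  refine (continuous_const.matrix_vecMul continuous_id).continuousAt.comp
    ((continuousAt_matrix_inv _ ?_).comp hsub.continuousAt)
  rw [Ring.inverse_eq_inv']
  exact continuousAt_inv₀ (det_scalar_sub_ne_zero_of_specRad_lt hs)

section Resolvent

variable {A : Matrix (Fin n) (Fin n) ℝ} {w : Fin n → ℝ} {s : ℝ}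

lemma pos_of_vecMul_eq_smul_sub_one (hA : ∀ i j, 0 ≤ A i j) (hs : 0 < s) (hw : 0 ≤ w)
    (h : w ᵥ* A = s • w - 1) (i : Fin n) : 0 < w i := by
  have hwA : 0 ≤ (w ᵥ* A) i := dotProduct_nonneg_of_nonneg hw fun k => hA k i
  have hi := congrFun h i
  simp only [Pi.sub_apply, Pi.smul_apply, smul_eq_mul, Pi.one_apply] at hi
  nlinarith

/-- A minimum principle: at a most negative coordinate `m`, `(w A)ₘ ≥ wₘ ∑ᵢ Aᵢₘ ≥ s wₘ`. -/
lemma nonneg_of_vecMul_eq_smul_sub_one (hA : ∀ i j, 0 ≤ A i j) (hAs : norm1 A ≤ s)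
    (h : w ᵥ* A = s • w - 1) : 0 ≤ w := by
  intro i
  have : Nonempty (Fin n) := ⟨i⟩
  obtain ⟨m, hm⟩ := Finite.exists_min w
  by_contra! hi
  have hwm : w m < 0 := (hm i).trans_lt hi
  have hcol : (1 ᵥ* A) m ≤ s := (one_vecMul_le_norm1 hA m).trans (by simpa using hAs)
  have hlow : w m * s ≤ (w ᵥ* A) m :=
    calc w m * s ≤ w m * (1 ᵥ* A) m := mul_le_mul_of_nonpos_left hcol hwm.le
      _ = ((w m • 1) ᵥ* A) m := by rw [smul_vecMul]; rfl
      _ ≤ (w ᵥ* A) m := vecMul_mono_of_nonneg hA (fun k => by simpa using hm k) m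
  have hm' := congrFun h m
  simp only [Pi.sub_apply, Pi.smul_apply, smul_eq_mul, Pi.one_apply] at hm'
  linarith

/-- The set of `s > λ(A)` with `resolventWeight A s > 0` is open by continuity, closed in
`(λ(A), ∞)` because a nonnegative solution is automatically positive, and contains every
`s ≥ ‖A‖₁` by the minimum principle; connectedness does the rest. -/
lemma resolventWeight_pos (hA : ∀ i j, 0 ≤ A i j) (hs : specRad A < s) (i : Fin n) :
    0 < resolventWeight A s i := by
  set u := Set.Ioi (specRad A) ∩ resolventWeight A ⁻¹' {v | ∀ i, 0 < v i}
  have hρ := specRad_nonneg A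
  have hcont := continuousOn_resolventWeight A
  have hweight (s : ℝ) (hs : specRad A < s) := resolventWeight_vecMul
    (det_scalar_sub_ne_zero_of_specRad_lt hs)
  have hu : IsOpen u := by
    refine hcont.isOpen_inter_preimage isOpen_Ioi ?_
    simpa only [Set.ofPred_forall] using
      isOpen_iInter_of_finite fun i => isOpen_lt continuous_const (continuous_apply i)
  have hne : (Set.Ioi (specRad A) ∩ u).Nonempty := by
    have h1 : specRad A < norm1 A + 1 := by linarith [specRad_le_norm1 hA]
    refine ⟨norm1 A + 1, h1, h1, pos_of_vecMul_eq_smul_sub_one hA (by linarith) ?_ (hweight _ h1)⟩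
    exact nonneg_of_vecMul_eq_smul_sub_one hA (by linarith) (hweight _ h1)
  have hclosed : closure u ∩ Set.Ioi (specRad A) ⊆ u := by
    rintro t ⟨htu, ht⟩
    refine ⟨ht, pos_of_vecMul_eq_smul_sub_one hA (hρ.trans_lt ht) (fun k => ?_) (hweight t ht)⟩
    have hk := continuousAt_pi.1 (hcont.continuousAt (Ioi_mem_nhds ht)) k
    exact ContinuousWithinAt.closure_le (f := fun _ => 0)
      (g := fun r => resolventWeight A r k) htu continuousWithinAt_const
      hk.continuousWithinAt fun r hr => (hr.2 k).le
  exact (isPreconnected_Ioi.subset_of_closure_inter_subset hu hne hclosed hs).2 i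

lemma exists_pos_vecMul_le_of_specRad_lt (hA : ∀ i j, 0 ≤ A i j) (hs : specRad A < s) :
    ∃ w : Fin n → ℝ, (∀ i, 0 < w i) ∧ w ᵥ* A ≤ s • w := by
  refine ⟨resolventWeight A s, resolventWeight_pos hA hs, ?_⟩
  rw [resolventWeight_vecMul (det_scalar_sub_ne_zero_of_specRad_lt hs)]
  exact sub_le_self _ zero_le_one

end Resolvent

section Scan

variable {R : Matrix (Fin n) (Fin n) ℝ}

lemma colMat_nonneg (hR : ∀ i j, 0 ≤ R i j) (j i k : Fin n) : 0 ≤ colMat R j i k := by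
  simp only [colMat, of_apply]
  split_ifs <;> simp [hR]

lemma scanMat_nonneg (hR : ∀ i j, 0 ≤ R i j) (i k : Fin n) : 0 ≤ scanMat R i k := by
  refine List.prod_induction (p := fun M : Matrix (Fin n) (Fin n) ℝ => ∀ i k, 0 ≤ M i k)
    ?_ ?_ ?_ i k
  · intro M N hM hN i k
    rw [mul_apply]
    exact Finset.sum_nonneg fun m _ => mul_nonneg (hM i m) (hN m k)
  · intro i k
    rw [one_apply]
    split_ifs <;> simp
  · simpa using colMat_nonneg hR

lemma vecMul_colMat (w : Fin n → ℝ) (j : Fin n) :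
    w ᵥ* colMat R j = Function.update w j ((w ᵥ* R) j) := by
  ext k
  rcases eq_or_ne k j with rfl | hkj
  · simp [vecMul, dotProduct, colMat]
  · simp [vecMul, dotProduct, colMat, hkj]

lemma vecMul_prod_colMat_le (hR : ∀ i j, 0 ≤ R i j) {w v : Fin n → ℝ} (hwv : w ᵥ* R ≤ v)
    (hvw : v ≤ w) (l : List (Fin n)) :
    w ᵥ* (l.map (colMat R)).prod ≤ w ∧ ∀ k ∈ l, (w ᵥ* (l.map (colMat R)).prod) k ≤ v k := by
  induction l using List.reverseRecOn with
  | nil => simp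
  | append_singleton l j ih =>
    obtain ⟨hle, hl⟩ := ih
    set u := w ᵥ* (l.map (colMat R)).prod
    have huj : (u ᵥ* R) j ≤ v j := (vecMul_mono_of_nonneg hR hle j).trans (hwv j)
    rw [List.map_append, List.map_singleton, List.prod_append, List.prod_singleton,
      ← vecMul_vecMul, vecMul_colMat]
    refine ⟨update_le_iff.2 ⟨huj.trans (hvw j), fun k _ => hle k⟩, fun k hk => ?_⟩
    rcases eq_or_ne k j with rfl | hkj
    · rwa [Function.update_self]
    · rw [Function.update_of_ne hkj]
      exact hl k (by simpa [hkj] using hk)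

lemma vecMul_scanMat_le (hR : ∀ i j, 0 ≤ R i j) {w v : Fin n → ℝ} (hwv : w ᵥ* R ≤ v)
    (hvw : v ≤ w) : w ᵥ* scanMat R ≤ v :=
  fun k => (vecMul_prod_colMat_le hR hwv hvw _).2 k (List.mem_finRange k)

lemma norm1_scanMat_le (hR : ∀ i j, 0 ≤ R i j) (hR1 : norm1 R ≤ 1) :
    norm1 (scanMat R) ≤ norm1 R := by
  have hcol : 1 ᵥ* scanMat R ≤ 1 ᵥ* R :=
    vecMul_scanMat_le hR le_rfl ((one_vecMul_le_norm1 hR).trans fun j => by simpa using hR1)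
  refine Real.iSup_le (fun j => ?_) (norm1_nonneg R)
  calc ∑ i, |scanMat R i j| = (1 ᵥ* scanMat R) j := by
        simp [one_vecMul_apply, abs_of_nonneg (scanMat_nonneg hR _ j)]
    _ ≤ (1 ᵥ* R) j := hcol j
    _ ≤ norm1 R := by simpa using one_vecMul_le_norm1 hR j

lemma specRad_scanMat_le (hR : ∀ i j, 0 ≤ R i j) {t : ℝ} (ht : specRad R < t) (ht1 : t ≤ 1) :
    specRad (scanMat R) ≤ t := by
  obtain ⟨w, hw, hwR⟩ := exists_pos_vecMul_le_of_specRad_lt hR ht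
  have htw : t • w ≤ w := fun i => mul_le_of_le_one_left (hw i).le ht1
  exact specRad_le_of_vecMul_le (scanMat_nonneg hR) hw ((specRad_nonneg R).trans ht.le)
    (vecMul_scanMat_le hR hwR htw)

end Scan

/-- If `R` is nonnegative with `‖R‖₁ ≤ 1` then the scan matrix `R⃗` satisfies
`λ(R⃗) ≤ λ(R)` and `‖R⃗‖₁ ≤ ‖R‖₁`. -/
theorem scanMat_specRad_norm1_le {n : ℕ} (R : Matrix (Fin n) (Fin n) ℝ)
    (hR : ∀ i j, 0 ≤ R i j) (hR1 : norm1 R ≤ 1) :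
    specRad (scanMat R) ≤ specRad R ∧ norm1 (scanMat R) ≤ norm1 R := by
  have hnorm := norm1_scanMat_le hR hR1
  refine ⟨?_, hnorm⟩
  rcases le_or_gt 1 (specRad R) with hρ | hρ
  · calc specRad (scanMat R) ≤ norm1 (scanMat R) := specRad_le_norm1 (scanMat_nonneg hR)
      _ ≤ 1 := hnorm.trans hR1
      _ ≤ specRad R := hρ
  · refine le_of_forall_gt_imp_ge_of_dense fun t ht => ?_
    exact (specRad_scanMat_le hR (lt_min ht hρ) (min_le_right t 1)).trans (min_le_left t 1)
end

section
/- Let G be a connected simple graph on n vertices with maximum degree Δ that is not Δ-regular. Then λ(G) ≤ √(Δ² − 4/n²) < Δ − 2/(Δn²). -/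
open Matrix

/-!
Write `Δ` for the maximum degree and `E(y) = ∑_{uv ∈ E} (y u - y v)²`. For every real `y`,
`yᵀ A y = ∑ deg v · y v² - E(y) ≤ Δ ‖y‖² - (y w² + E(y))` when `w` has degree `< Δ`.
Along a path from `w` to `v`, of length at most `n - 1`, Cauchy–Schwarz applied to
`y v = y w + ∑ (increments)` gives `y v² ≤ n (y w² + E(y))`; summing over `v ≠ w` gives
`‖y‖² ≤ (n² - n + 1)(y w² + E(y))`, so `yᵀ A y ≤ (Δ - 1/(n² - n + 1)) ‖y‖²`.
Since `A` is nonnegative, an eigenvector `x` for any eigenvalue `μ` yields `y = |x|` with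
`|μ| ‖y‖² ≤ yᵀ A y`, which bounds the spectral radius. The rest is arithmetic, using `Δ ≥ 2`.
-/

open Finset

theorem Matrix.exists_norm_smul_le_mulVec_of_isRoot_charpoly {ι : Type*} [Fintype ι]
    [DecidableEq ι] {A : Matrix ι ι ℝ} (hA : ∀ i j, 0 ≤ A i j) {μ : ℂ}
    (hμ : (A.map (fun a => (a : ℂ))).charpoly.IsRoot μ) :
    ∃ y : ι → ℝ, 0 ≤ y ∧ y ≠ 0 ∧ ‖μ‖ • y ≤ A *ᵥ y := by
  rw [Polynomial.IsRoot, eval_charpoly, ← exists_mulVec_eq_zero_iff] at hμ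
  obtain ⟨x, hx0, hx⟩ := hμ
  have heig : ∀ i, μ * x i = ∑ j, (A i j : ℂ) * x j := fun i => by
    have := congrFun hx i
    rw [sub_mulVec, Pi.sub_apply, scalar_apply, mulVec_diagonal, Pi.zero_apply,
      sub_eq_zero] at this
    simpa [mulVec, dotProduct] using this
  refine ⟨fun i => ‖x i‖, fun i => norm_nonneg _, fun h => hx0 (funext fun i => ?_),
    fun i => ?_⟩
  · simpa using congrFun h i
  calc ‖μ‖ * ‖x i‖ = ‖∑ j, (A i j : ℂ) * x j‖ := by rw [← heig, norm_mul]
    _ ≤ ∑ j, A i j * ‖x j‖ := (norm_sum_le _ _).trans_eq <| sum_congr rfl fun j _ => by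
        rw [norm_mul, Complex.norm_of_nonneg (hA i j)]

theorem specRad_le_of_dotProduct_mulVec_le {n : ℕ} {A : Matrix (Fin n) (Fin n) ℝ}
    (hA : ∀ i j, 0 ≤ A i j) {c : ℝ} (hc : 0 ≤ c)
    (h : ∀ y, 0 ≤ y → y ⬝ᵥ (A *ᵥ y) ≤ c * (y ⬝ᵥ y)) : specRad A ≤ c := by
  refine Real.sSup_le ?_ hc
  rintro _ ⟨μ, hμ, rfl⟩
  obtain ⟨y, hy0, hy, hμy⟩ := exists_norm_smul_le_mulVec_of_isRoot_charpoly hA hμ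
  have hpos : 0 < y ⬝ᵥ y :=
    (dotProduct_nonneg_of_nonneg hy0 hy0).lt_of_ne' (dotProduct_self_eq_zero.not.mpr hy)
  refine le_of_mul_le_mul_right ?_ hpos
  calc ‖μ‖ * (y ⬝ᵥ y) = y ⬝ᵥ (‖μ‖ • y) := by rw [dotProduct_smul, smul_eq_mul]
    _ ≤ y ⬝ᵥ (A *ᵥ y) := dotProduct_le_dotProduct_of_nonneg_left hμy hy0
    _ ≤ c * (y ⬝ᵥ y) := h y hy0

namespace SimpleGraph

theorem Walk.sq_le_length_add_one_mul {V : Type*} {G : SimpleGraph V} {u v : V}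
    (p : G.Walk u v) (y : V → ℝ) :
    y v ^ 2 ≤ (p.length + 1) *
      (y u ^ 2 + ∑ i ∈ range p.length, (y (p.getVert (i + 1)) - y (p.getVert i)) ^ 2) := by
  have htel : y v = y u + ∑ i ∈ range p.length, (y (p.getVert (i + 1)) - y (p.getVert i)) := by
    rw [sum_range_sub (fun i => y (p.getVert i)), getVert_length, getVert_zero]; ring
  have := sq_sum_le_card_mul_sum_sq (s := range (p.length + 1))
    (f := fun i => if i = 0 then y u else y (p.getVert i) - y (p.getVert (i - 1)))
  rw [sum_range_succ', sum_range_succ'] at this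
  simp only [add_eq_zero, one_ne_zero, and_false, if_false, if_true, add_tsub_cancel_right,
    card_range, Nat.cast_add, Nat.cast_one] at this
  rwa [htel, add_comm (y u), add_comm (y u ^ 2)]

variable {V : Type*} [Fintype V] (G : SimpleGraph V) [DecidableRel G.Adj]

noncomputable def dirichletEnergy (y : V → ℝ) : ℝ :=
  (∑ a, ∑ b, if G.Adj a b then (y a - y b) ^ 2 else 0) / 2

theorem dotProduct_adjMatrix_mulVec_self (y : V → ℝ) :
    y ⬝ᵥ (G.adjMatrix ℝ *ᵥ y) = ∑ v, G.degree v * y v ^ 2 - G.dirichletEnergy y := by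
  classical
  have h := G.lapMatrix_toLinearMap₂' ℝ y
  rw [toLinearMap₂'_apply', lapMatrix, sub_mulVec, dotProduct_sub,
    dotProduct_mulVec_degMatrix] at h
  rw [dirichletEnergy, ← h]
  simp only [sq, mul_assoc]
  ring

theorem dotProduct_adjMatrix_mulVec_le_of_degree_lt {w : V} (hw : G.degree w < G.maxDegree)
    (y : V → ℝ) :
    y ⬝ᵥ (G.adjMatrix ℝ *ᵥ y) ≤
      G.maxDegree * (y ⬝ᵥ y) - (y w ^ 2 + G.dirichletEnergy y) := by
  have hdef : y w ^ 2 ≤ ∑ v, ((G.maxDegree : ℝ) - G.degree v) * y v ^ 2 := by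
    have hw' : (1 : ℝ) ≤ G.maxDegree - G.degree w := by
      rw [le_sub_iff_add_le']; exact_mod_cast hw
    refine le_trans ?_ (single_le_sum (fun v _ => ?_) (mem_univ w))
    · nlinarith [sq_nonneg (y w)]
    · exact mul_nonneg (sub_nonneg.mpr (by exact_mod_cast G.degree_le_maxDegree v)) (sq_nonneg _)
  have hsum : (G.maxDegree : ℝ) * (y ⬝ᵥ y) = ∑ v, G.degree v * y v ^ 2
      + ∑ v, ((G.maxDegree : ℝ) - G.degree v) * y v ^ 2 := by
    rw [← sum_add_distrib, dotProduct, mul_sum]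
    exact sum_congr rfl fun v _ => by ring
  rw [dotProduct_adjMatrix_mulVec_self]
  linarith

theorem dirichletEnergy_nonneg (y : V → ℝ) : 0 ≤ G.dirichletEnergy y :=
  div_nonneg (sum_nonneg fun _ _ => sum_nonneg fun _ _ => by split_ifs <;> positivity) zero_le_two

variable {G}

theorem Walk.IsPath.sum_sq_le_dirichletEnergy {u v : V} {p : G.Walk u v} (hp : p.IsPath)
    (y : V → ℝ) :
    ∑ i ∈ range p.length, (y (p.getVert (i + 1)) - y (p.getVert i)) ^ 2 ≤
      G.dirichletEnergy y := by
  classical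
  let F : V × V → ℝ := fun e => (y e.1 - y e.2) ^ 2
  let fwd : ℕ → V × V := fun i => (p.getVert i, p.getVert (i + 1))
  let bwd : ℕ → V × V := fun i => (p.getVert (i + 1), p.getVert i)
  have inj : ∀ i j, i ≤ p.length → j ≤ p.length → p.getVert i = p.getVert j → i = j :=
    fun i j hi hj h => hp.getVert_injOn hi hj h
  have hfwd : Set.InjOn fwd (range p.length) := fun i hi j hj h => by
    simp only [coe_range, Set.mem_Iio] at hi hj
    exact inj i j hi.le hj.le (Prod.ext_iff.1 h).1
  have hbwd : Set.InjOn bwd (range p.length) := fun i hi j hj h => by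
    simp only [coe_range, Set.mem_Iio] at hi hj
    exact Nat.succ_injective (inj _ _ hi hj (Prod.ext_iff.1 h).1)
  have hdisj : Disjoint ((range p.length).image fwd) ((range p.length).image bwd) := by
    rw [Finset.disjoint_left]
    rintro _ hx hx'
    obtain ⟨i, hi, rfl⟩ := mem_image.1 hx
    obtain ⟨j, hj, h⟩ := mem_image.1 hx'
    rw [mem_range] at hi hj
    have h1 := inj _ _ (by omega) hi.le (Prod.ext_iff.1 h).1
    have h2 := inj _ _ hj.le (by omega) (Prod.ext_iff.1 h).2
    omega
  have hsub : (range p.length).image fwd ∪ (range p.length).image bwd ⊆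
      univ.filter fun e : V × V => G.Adj e.1 e.2 := by
    simp only [subset_iff, mem_union, mem_image, mem_range, mem_filter, mem_univ, true_and]
    rintro _ (⟨i, hi, rfl⟩ | ⟨i, hi, rfl⟩)
    · exact p.adj_getVert_succ hi
    · exact (p.adj_getVert_succ hi).symm
  -- The steps of the path, taken in both directions, are distinct adjacent ordered pairs.
  have : 2 * ∑ i ∈ range p.length, (y (p.getVert (i + 1)) - y (p.getVert i)) ^ 2 ≤
      2 * G.dirichletEnergy y :=
    calc _ = ∑ e ∈ (range p.length).image fwd ∪ (range p.length).image bwd, F e := by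
          rw [sum_union hdisj, sum_image hfwd, sum_image hbwd, two_mul]
          congr 1
          exact sum_congr rfl fun i _ => by simp only [F, fwd]; ring
      _ ≤ ∑ e ∈ univ.filter fun e : V × V => G.Adj e.1 e.2, F e :=
          sum_le_sum_of_subset_of_nonneg hsub fun _ _ _ => sq_nonneg _
      _ = 2 * G.dirichletEnergy y := by
          rw [dirichletEnergy, sum_filter, ← univ_product_univ, sum_product]; ring
  linarith

theorem Connected.sq_le_card_mul (hG : G.Connected) (y : V → ℝ) (u v : V) :
    y v ^ 2 ≤ Fintype.card V * (y u ^ 2 + G.dirichletEnergy y) := by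
  classical
  let p := (hG u v).some.toPath
  have hS := p.2.sum_sq_le_dirichletEnergy y
  have hlen : (p.1.length + 1 : ℝ) ≤ Fintype.card V := by exact_mod_cast p.2.length_lt
  calc y v ^ 2 ≤ (p.1.length + 1) * (y u ^ 2 + ∑ i ∈ range p.1.length,
        (y (p.1.getVert (i + 1)) - y (p.1.getVert i)) ^ 2) := p.1.sq_le_length_add_one_mul y
    _ ≤ (p.1.length + 1) * (y u ^ 2 + G.dirichletEnergy y) := by gcongr
    _ ≤ Fintype.card V * (y u ^ 2 + G.dirichletEnergy y) :=
        mul_le_mul_of_nonneg_right hlen (by positivity [G.dirichletEnergy_nonneg y])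

theorem Connected.sum_sq_le (hG : G.Connected) (y : V → ℝ) (w : V) :
    ∑ v, y v ^ 2 ≤
      ((Fintype.card V : ℝ) ^ 2 - Fintype.card V + 1) * (y w ^ 2 + G.dirichletEnergy y) := by
  classical
  have hE := G.dirichletEnergy_nonneg y
  have hrest := sum_le_card_nsmul (univ.erase w) _ _ fun v _ => hG.sq_le_card_mul y w v
  rw [card_erase_of_mem (mem_univ w), card_univ, nsmul_eq_mul,
    Nat.cast_pred (Fintype.card_pos_iff.2 ⟨w⟩)] at hrest
  rw [← add_sum_erase _ _ (mem_univ w)]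
  nlinarith

theorem Connected.dotProduct_adjMatrix_mulVec_le (hG : G.Connected) {w : V}
    (hw : G.degree w < G.maxDegree) (y : V → ℝ) :
    y ⬝ᵥ (G.adjMatrix ℝ *ᵥ y) ≤
      (G.maxDegree - 1 / ((Fintype.card V : ℝ) ^ 2 - Fintype.card V + 1)) * (y ⬝ᵥ y) := by
  have hm : 0 < (Fintype.card V : ℝ) ^ 2 - Fintype.card V + 1 := by
    nlinarith [sq_nonneg ((Fintype.card V : ℝ) - 1)]
  have hT : y ⬝ᵥ y / ((Fintype.card V : ℝ) ^ 2 - Fintype.card V + 1) ≤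
      y w ^ 2 + G.dirichletEnergy y := by
    rw [div_le_iff₀' hm, dotProduct]
    simpa only [sq] using hG.sum_sq_le y w
  have := G.dotProduct_adjMatrix_mulVec_le_of_degree_lt hw y
  rw [sub_mul, one_div_mul_eq_div]
  linarith

theorem Connected.two_le_maxDegree (hG : G.Connected) {w : V} (hw : G.degree w < G.maxDegree) :
    2 ≤ G.maxDegree := by
  have := hG.nonempty
  obtain ⟨v, hv⟩ := G.exists_maximal_degree_vertex
  obtain ⟨u, hvu⟩ := (G.degree_pos_iff_exists_adj v).1 (by omega)
  have : Nontrivial V := ⟨⟨v, u, hvu.ne⟩⟩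
  have := hG.preconnected.degree_pos_of_nontrivial w
  omega

end SimpleGraph

theorem sub_one_div_le_sqrt_sq_sub {D N : ℝ} (hD : 2 ≤ D) (hN : 2 ≤ N) :
    D - 1 / (N ^ 2 - N + 1) ≤ √(D ^ 2 - 4 / N ^ 2) := by
  set m := N ^ 2 - N + 1 with hm_def
  have hm : 1 ≤ m := by nlinarith
  rw [Real.le_sqrt' (by rw [sub_pos, div_lt_iff₀ (by linarith)]; nlinarith)]
  calc (D - 1 / m) ^ 2 = D ^ 2 - (2 * D * m - 1) / m ^ 2 := by field_simp; ring
    _ ≤ D ^ 2 - (4 * m - 1) / m ^ 2 := by gcongr; nlinarith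
    _ ≤ D ^ 2 - 4 / N ^ 2 := sub_le_sub_left ?_ _
  rw [div_le_div_iff₀ (by positivity) (by positivity), hm_def]
  nlinarith [mul_nonneg (sub_nonneg.2 hN) (sub_nonneg.2 hN)]

theorem sqrt_sq_sub_lt_sub {D N : ℝ} (hD : 0 < D) (hDN : 2 < D ^ 2 * N ^ 2) :
    √(D ^ 2 - 4 / N ^ 2) < D - 2 / (D * N ^ 2) := by
  have hN : N ≠ 0 := by rintro rfl; norm_num at hDN
  have hpos : 0 < D - 2 / (D * N ^ 2) := by
    rw [sub_pos, div_lt_iff₀ (by positivity)]; nlinarith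
  rw [Real.sqrt_lt' hpos]
  have : (D - 2 / (D * N ^ 2)) ^ 2 = D ^ 2 - 4 / N ^ 2 + 4 / (D ^ 2 * N ^ 4) := by
    field_simp; ring
  rw [this]
  have : 0 < 4 / (D ^ 2 * N ^ 4) := by positivity
  linarith

theorem specRad_nonregular_bound_general {n : ℕ}
    (G : SimpleGraph (Fin n)) [DecidableRel G.Adj]
    (hconn : G.Connected) (hirr : ¬ G.IsRegularOfDegree G.maxDegree) :
    specRad (G.adjMatrix ℝ) ≤ Real.sqrt ((G.maxDegree : ℝ) ^ 2 - 4 / (n : ℝ) ^ 2) ∧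
    Real.sqrt ((G.maxDegree : ℝ) ^ 2 - 4 / (n : ℝ) ^ 2)
      < (G.maxDegree : ℝ) - 2 / ((G.maxDegree : ℝ) * (n : ℝ) ^ 2) := by
  obtain ⟨w, hw⟩ : ∃ w, G.degree w < G.maxDegree := by
    by_contra! h
    exact hirr fun v => (G.degree_le_maxDegree v).antisymm (h v)
  have hΔ : (2 : ℝ) ≤ G.maxDegree := by exact_mod_cast hconn.two_le_maxDegree hw
  have hΔn : (G.maxDegree : ℝ) < n := by
    have := hconn.nonempty
    simpa using G.maxDegree_lt_card_verts
  have hΔn4 : 4 ≤ (G.maxDegree : ℝ) * n := by nlinarith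
  have hquad := hconn.dotProduct_adjMatrix_mulVec_le hw
  rw [Fintype.card_fin] at hquad
  refine ⟨specRad_le_of_dotProduct_mulVec_le (fun i j => ?_) (Real.sqrt_nonneg _) fun y hy => ?_,
    sqrt_sq_sub_lt_sub (by linarith) (by nlinarith)⟩
  · rw [SimpleGraph.adjMatrix_apply]
    split_ifs <;> norm_num
  · exact (hquad y).trans <| mul_le_mul_of_nonneg_right
      (sub_one_div_le_sqrt_sq_sub hΔ (by linarith)) (dotProduct_nonneg_of_nonneg hy hy)

/-- For a connected simple graph on `n` vertices with maximum degree `Δ` that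
is not `Δ`-regular, `λ(G) ≤ √(Δ² - 4/n²) < Δ - 2/(Δn²)`. -/
theorem specRad_nonregular_bound {n : ℕ} (hn : 0 < n)
    (G : SimpleGraph (Fin n)) [DecidableRel G.Adj]
    (hconn : G.Connected) (hirr : ¬ G.IsRegularOfDegree G.maxDegree) :
    specRad (G.adjMatrix ℝ) ≤ Real.sqrt ((G.maxDegree : ℝ) ^ 2 - 4 / (n : ℝ) ^ 2) ∧
    Real.sqrt ((G.maxDegree : ℝ) ^ 2 - 4 / (n : ℝ) ^ 2)
      < (G.maxDegree : ℝ) - 2 / ((G.maxDegree : ℝ) * (n : ℝ) ^ 2) :=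
  specRad_nonregular_bound_general G hconn hirr
end
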